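/- arXiv:1304.6292 — 2 statements merged into one kernel-verified Lean document; each statement's English description precedes it below -/
import Mathlib

section
/- (Extended Rogers lemma) Let $X$ be a smooth manifold, $\beta$ an $n$-form on $X$ (not necessarily closed), and $v_1, \ldots, v_k$ vector fields with $k \geq 1$. Then $(-1)^k d\,\iota_{v_1 \wedge \cdots \wedge v_k}\beta = \sum_{1 \le i < j \le k} (-1)^{i+j} \iota_{[v_i,v_j] \wedge v_1 \wedge \cdots \wedge \hat v_i \wedge \cdots \wedge \hat v_j \wedge \cdots \wedge v_k}\beta + \sum_{i=1}^k (-1)^i \iota_{v_1 \wedge \cdots \wedge \hat v_i \wedge \cdots \wedge v_k}\mathcal{L}_{v_i}\beta + \iota_{v_1 \wedge \cdots \wedge v_k} d\beta$. -/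
/-- An abstract (ungraded) Cartan calculus: a Lie algebra `V` of vector fields
acting on a module `Ω` of differential forms by interior products `ι`, together
with the de Rham differential `d`, satisfying the standard Cartan identities
(`d² = 0`, `ι_v ι_v = 0` and `ι_{[u,v]} = [𝓛_u, ι_v]` with
`𝓛_v = d ∘ ι_v + ι_v ∘ d`). -/
structure CartanModule (V : Type*) [LieRing V] [LieAlgebra ℝ V]
    (Ω : Type*) [AddCommGroup Ω] [Module ℝ Ω] where
  d : Ω →ₗ[ℝ] Ω
  ι : V →ₗ[ℝ] Ω →ₗ[ℝ] Ω
  d_sq : ∀ α : Ω, d (d α) = 0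
  ι_ι : ∀ (v : V) (α : Ω), ι v (ι v α) = 0
  cartan_comm : ∀ (u v : V) (α : Ω),
    ι ⁅u, v⁆ α =
      (d (ι u (ι v α)) + ι u (d (ι v α))) - ι v (d (ι u α) + ι u (d α))

namespace CartanModule

variable {V : Type*} [LieRing V] [LieAlgebra ℝ V]
  {Ω : Type*} [AddCommGroup Ω] [Module ℝ Ω]

/-- The Lie derivative along a vector field, via Cartan's magic formula. -/
def lieD (C : CartanModule V Ω) (v : V) (α : Ω) : Ω :=
  C.d (C.ι v α) + C.ι v (C.d α)

/-- Iterated interior product with a decomposable multivector field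
`v₁ ∧ ⋯ ∧ v_k` (encoded as the list `[v₁, …, v_k]`):
`ι_{v₁ ∧ ⋯ ∧ v_k} = ι_{v_k} ∘ ⋯ ∘ ι_{v₁}`. -/
def ιList (C : CartanModule V Ω) : List V → Ω → Ω
  | [], α => α
  | v :: l, α => C.ιList l (C.ι v α)

end CartanModule

/-!
Induction on the number of vector fields: since
`ι_{v ∧ v₂ ∧ ⋯ ∧ v_k} β = ι_{v₂ ∧ ⋯ ∧ v_k} (ι_v β)`, the identity for `v₂, …, v_k` applied to the
form `ι_v β` gives the one for `v, v₂, …, v_k` after rewriting with `d ι_v = 𝓛_v - ι_v d`,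
`𝓛_u ι_v = ι_{[u,v]} + ι_v 𝓛_u` and `ι_u ι_v = -ι_v ι_u`.
The bracket terms `[v, v_j]` of the longer list come from commuting `𝓛_{v_j}` past `ι_v`.
-/

namespace CartanModule

variable {V : Type*} [LieRing V] [LieAlgebra ℝ V]
  {Ω : Type*} [AddCommGroup Ω] [Module ℝ Ω] (C : CartanModule V Ω)

theorem ι_ι_anticomm (u v : V) (α : Ω) : C.ι u (C.ι v α) = -C.ι v (C.ι u α) := by
  have h := C.ι_ι (u + v) α
  simp only [map_add, LinearMap.add_apply, C.ι_ι, zero_add, add_zero] at h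
  exact eq_neg_of_add_eq_zero_right h

theorem d_ι (v : V) (α : Ω) : C.d (C.ι v α) = C.lieD v α - C.ι v (C.d α) := by
  rw [lieD, add_sub_cancel_right]

theorem lieD_ι (u v : V) (α : Ω) :
    C.lieD u (C.ι v α) = C.ι ⁅u, v⁆ α + C.ι v (C.lieD u α) := by
  rw [lieD, lieD, C.cartan_comm, map_add]
  abel

theorem ιList_add (l : List V) (α β : Ω) :
    C.ιList l (α + β) = C.ιList l α + C.ιList l β := by
  induction l generalizing α β with
  | nil => rfl
  | cons v l ih => simp only [ιList, map_add, ih]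

theorem ιList_neg (l : List V) (α : Ω) : C.ιList l (-α) = -C.ιList l α := by
  induction l generalizing α with
  | nil => rfl
  | cons v l ih => simp only [ιList, map_neg, ih]

theorem ιList_sub (l : List V) (α β : Ω) :
    C.ιList l (α - β) = C.ιList l α - C.ιList l β := by
  rw [sub_eq_add_neg, ιList_add, ιList_neg, sub_eq_add_neg]

theorem ιList_cons_ι (u v : V) (l : List V) (α : Ω) :
    C.ιList (u :: l) (C.ι v α) = -C.ιList (u :: v :: l) α := by
  simp only [ιList, ι_ι_anticomm C u v, ιList_neg]

def bracketSum (l : List V) (β : Ω) : Ω :=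
  ∑ i : Fin l.length, ∑ j : Fin l.length,
    if (i : ℕ) < (j : ℕ) then
      ((-1 : ℝ) ^ ((i : ℕ) + 1 + ((j : ℕ) + 1))) •
        C.ιList (⁅l.get i, l.get j⁆ :: ((l.eraseIdx (j : ℕ)).eraseIdx (i : ℕ))) β
    else 0

def lieDSum (l : List V) (β : Ω) : Ω :=
  ∑ i : Fin l.length,
    ((-1 : ℝ) ^ ((i : ℕ) + 1)) • C.ιList (l.eraseIdx (i : ℕ)) (C.lieD (l.get i) β)

theorem bracketSum_cons (v : V) (l : List V) (β : Ω) :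
    C.bracketSum (v :: l) β =
      -(∑ j : Fin l.length, ((-1 : ℝ) ^ ((j : ℕ) + 1)) •
          C.ιList (l.eraseIdx (j : ℕ)) (C.ι ⁅l.get j, v⁆ β))
        - C.bracketSum l (C.ι v β) := by
  simp only [bracketSum, List.length_cons, Fin.sum_univ_succ, Fin.val_zero, Fin.val_succ,
    Nat.not_lt_zero, Nat.zero_lt_succ, Nat.succ_lt_succ_iff, if_false, if_true, zero_add,
    List.get_cons_zero, List.get_cons_succ', List.eraseIdx_cons_zero, List.eraseIdx_cons_succ]
  rw [sub_eq_add_neg, ← Finset.sum_neg_distrib, ← Finset.sum_neg_distrib]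
  congr 1
  · refine Finset.sum_congr rfl fun j _ => ?_
    rw [ιList, ← lie_skew, map_neg, LinearMap.neg_apply, ιList_neg, smul_neg, neg_inj]
    congr 1
    ring
  · refine Finset.sum_congr rfl fun i _ => ?_
    rw [← Finset.sum_neg_distrib]
    refine Finset.sum_congr rfl fun j _ => ?_
    split_ifs
    · rw [ιList_cons_ι, smul_neg, neg_neg]
      congr 1
      ring
    · rw [neg_zero]

theorem lieDSum_cons (v : V) (l : List V) (β : Ω) :
    C.lieDSum (v :: l) β =
      -C.ιList l (C.lieD v β)
        - ∑ i : Fin l.length, ((-1 : ℝ) ^ ((i : ℕ) + 1)) •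
            C.ιList (l.eraseIdx (i : ℕ)) (C.ι v (C.lieD (l.get i) β)) := by
  simp only [lieDSum, List.length_cons, Fin.sum_univ_succ, Fin.val_zero, Fin.val_succ,
    List.get_cons_zero, List.get_cons_succ', List.eraseIdx_cons_zero, List.eraseIdx_cons_succ,
    ιList, sub_eq_add_neg, ← Finset.sum_neg_distrib, zero_add, pow_one, one_smul,
    pow_succ _ (_ + 1), mul_neg_one, neg_smul]

theorem lieDSum_ι (v : V) (l : List V) (β : Ω) :
    C.lieDSum l (C.ι v β) =
      (∑ i : Fin l.length, ((-1 : ℝ) ^ ((i : ℕ) + 1)) •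
          C.ιList (l.eraseIdx (i : ℕ)) (C.ι ⁅l.get i, v⁆ β))
        + ∑ i : Fin l.length, ((-1 : ℝ) ^ ((i : ℕ) + 1)) •
            C.ιList (l.eraseIdx (i : ℕ)) (C.ι v (C.lieD (l.get i) β)) := by
  simp only [lieDSum, lieD_ι, ιList_add, smul_add, Finset.sum_add_distrib]

theorem neg_one_pow_smul_d_ιList (l : List V) (β : Ω) :
    ((-1 : ℝ) ^ l.length) • C.d (C.ιList l β) =
      C.bracketSum l β + C.lieDSum l β + C.ιList l (C.d β) := by
  induction l generalizing β with
  | nil => simp [ιList, bracketSum, lieDSum]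
  | cons v l ih =>
    rw [List.length_cons, pow_succ, mul_neg_one, neg_smul, ιList, ih, bracketSum_cons,
      lieDSum_cons, lieDSum_ι, d_ι, ιList_sub, ιList]
    abel

end CartanModule

theorem rogers_lemma_general
    {V : Type*} [LieRing V] [LieAlgebra ℝ V]
    {Ω : Type*} [AddCommGroup Ω] [Module ℝ Ω]
    (C : CartanModule V Ω) (l : List V) (β : Ω) :
    ((-1 : ℝ) ^ l.length) • C.d (C.ιList l β)
      = (∑ i : Fin l.length, ∑ j : Fin l.length,
          if (i : ℕ) < (j : ℕ) then
            ((-1 : ℝ) ^ ((i : ℕ) + 1 + ((j : ℕ) + 1))) •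
              C.ιList (⁅l.get i, l.get j⁆ :: ((l.eraseIdx (j : ℕ)).eraseIdx (i : ℕ))) β
          else 0)
        + (∑ i : Fin l.length,
            ((-1 : ℝ) ^ ((i : ℕ) + 1)) • C.ιList (l.eraseIdx (i : ℕ)) (C.lieD (l.get i) β))
        + C.ιList l (C.d β) :=
  C.neg_one_pow_smul_d_ιList l β

/-- extended Rogers lemma.  For an `n`-form `β` (not necessarily
closed) and vector fields `v₁, …, v_k` (`k ≥ 1`, encoded as a nonempty list `l`):
`(-1)^k d ι_{v₁∧⋯∧v_k} β
  = ∑_{i<j} (-1)^{i+j} ι_{[v_i,v_j] ∧ v₁ ∧ ⋯ ∧ v̂_i ∧ ⋯ ∧ v̂_j ∧ ⋯ ∧ v_k} β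
    + ∑_i (-1)^i ι_{v₁ ∧ ⋯ ∧ v̂_i ∧ ⋯ ∧ v_k} 𝓛_{v_i} β
    + ι_{v₁ ∧ ⋯ ∧ v_k} dβ`
(indices in the signs are 1-based as in the paper; list indices are 0-based). -/
theorem rogers_lemma
    {V : Type*} [LieRing V] [LieAlgebra ℝ V]
    {Ω : Type*} [AddCommGroup Ω] [Module ℝ Ω]
    (C : CartanModule V Ω) (l : List V) (hl : l ≠ []) (β : Ω) :
    ((-1 : ℝ) ^ l.length) • C.d (C.ιList l β)
      = (∑ i : Fin l.length, ∑ j : Fin l.length,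
          if (i : ℕ) < (j : ℕ) then
            ((-1 : ℝ) ^ ((i : ℕ) + 1 + ((j : ℕ) + 1))) •
              C.ιList (⁅l.get i, l.get j⁆ :: ((l.eraseIdx (j : ℕ)).eraseIdx (i : ℕ))) β
          else 0)
        + (∑ i : Fin l.length,
            ((-1 : ℝ) ^ ((i : ℕ) + 1)) • C.ιList (l.eraseIdx (i : ℕ)) (C.lieD (l.get i) β))
        + C.ιList l (C.d β) :=
  rogers_lemma_general C l β
end

section
/- Let $X$ be a smooth manifold and $\omega$ a closed 3-form. For vector fields $v_1, v_2, v_3$ and 1-forms $\theta_1, \theta_2, \theta_3$ on $X$, with the Courant-type binary bracket $\llbracket v_1+\theta_1, v_2+\theta_2\rrbracket = [v_1,v_2] + \mathcal{L}_{v_1}\theta_2 - \mathcal{L}_{v_2}\theta_1 - \tfrac{1}{2}d(\iota_{v_1}\theta_2 - \iota_{v_2}\theta_1) - \iota_{v_1\wedge v_2}\omega$ and the pairing $\langle v_1+\theta_1, v_2+\theta_2\rangle = \iota_{v_1}\theta_2 + \iota_{v_2}\theta_1$, the Jacobiator is exact: $\llbracket\llbracket e_1, e_2\rrbracket, e_3\rrbracket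 + \llbracket\llbracket e_2, e_3\rrbracket, e_1\rrbracket + \llbracket\llbracket e_3, e_1\rrbracket, e_2\rrbracket = \tfrac{1}{6}\, d\big(\langle\llbracket e_1,e_2\rrbracket, e_3\rangle + \langle\llbracket e_2,e_3\rrbracket, e_1\rangle + \langle\llbracket e_3,e_1\rrbracket, e_2\rangle\big)$ up to the homotopy term, i.e., the failure of the Jacobi identity is an exact 1-form. -/
namespace CartanModule

variable {V : Type*} [LieRing V] [LieAlgebra ℝ V]
  {Ω : Type*} [AddCommGroup Ω] [Module ℝ Ω]

/-- The `ω`-twisted Courant bracket on sections `v + θ` of `TX ⊕ T*X`: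
`⟦v₁+θ₁, v₂+θ₂⟧ = [v₁,v₂] + 𝓛_{v₁}θ₂ - 𝓛_{v₂}θ₁ - ½ d(ι_{v₁}θ₂ - ι_{v₂}θ₁)
 - ι_{v₁∧v₂}ω`. -/
noncomputable def courantBracket (C : CartanModule V Ω) (ω : Ω) (p q : V × Ω) : V × Ω :=
  (⁅p.1, q.1⁆,
    C.lieD p.1 q.2 - C.lieD q.1 p.2
      - (2 : ℝ)⁻¹ • C.d (C.ι p.1 q.2 - C.ι q.1 p.2)
      - C.ι q.1 (C.ι p.1 ω))

/-- The natural symmetric pairing `⟨v₁+θ₁, v₂+θ₂⟩ = ι_{v₁}θ₂ + ι_{v₂}θ₁` on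
sections of `TX ⊕ T*X`. -/
def courantPairing (C : CartanModule V Ω) (p q : V × Ω) : Ω :=
  C.ι p.1 q.2 + C.ι q.1 p.2

end CartanModule

theorem jacobiator_eq_of_leibniz {E F : Type*} [AddCommGroup E] [Module ℝ E]
    [AddCommGroup F] [Module ℝ F]
    (D : E →ₗ[ℝ] E →ₗ[ℝ] E) (δ : F →ₗ[ℝ] E) (P : E → E → F) (K : E → E → E)
    (hK : ∀ x y, K x y = D x y - (2 : ℝ)⁻¹ • δ (P x y))
    (leibniz : ∀ x y z, D x (D y z) = D (D x y) z + D y (D x z))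
    (add_swap : ∀ x y, D x y + D y x = δ (P x y))
    (exact_left : ∀ φ z, D (δ φ) z = 0) (a b c : E) :
    K (K a b) c + K (K b c) a + K (K c a) b
      = (6 : ℝ)⁻¹ • δ (P (K a b) c + P (K b c) a + P (K c a) b) := by
  have D_K_left : ∀ x y z, D (K x y) z = D (D x y) z := by
    simp [hK, exact_left]
  have sub_swap : ∀ x y, D x y - D y x = (2 : ℝ) • K x y := by
    intro x y
    rw [hK, smul_sub, smul_inv_smul₀ two_ne_zero, ← add_swap]
    module
  have cyclic_sum : D (D a b) c + D (D b c) a + D (D c a) b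
      = (2 : ℝ) • (δ (P (K a b) c + P (K b c) a + P (K c a) b)
          - (D (D a b) c + D (D b c) a + D (D c a) b)) :=
    calc _ = D a (D b c - D c b) + D b (D c a - D a c) + D c (D a b - D b a) := by
          simp only [map_sub]
          linear_combination (norm := module) -leibniz a b c - leibniz b c a - leibniz c a b
      _ = (2 : ℝ) • (D a (K b c) + D b (K c a) + D c (K a b)) := by
          simp only [sub_swap, map_smul, smul_add]
      _ = _ := by
          simp only [map_add, ← add_swap, D_K_left]
          module
  rw [hK (K a b), hK (K b c), hK (K c a), D_K_left, D_K_left, D_K_left]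
  simp only [map_add] at cyclic_sum ⊢
  linear_combination (norm := module) (3 : ℝ)⁻¹ • cyclic_sum

namespace CartanModule

variable {V : Type*} [LieRing V] [LieAlgebra ℝ V]
  {Ω : Type*} [AddCommGroup Ω] [Module ℝ Ω] (C : CartanModule V Ω)

noncomputable def dorfman (ω : Ω) : V × Ω →ₗ[ℝ] V × Ω →ₗ[ℝ] V × Ω :=
  LinearMap.mk₂ ℝ
    (fun p q => (⁅p.1, q.1⁆, C.lieD p.1 q.2 - C.ι q.1 (C.d p.2) - C.ι q.1 (C.ι p.1 ω)))
    (by intros; ext <;> simp [lieD, add_lie]; abel)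
    (by intros; ext <;> simp [lieD, smul_sub])
    (by intros; ext <;> simp [lieD, lie_add]; abel)
    (by intros; ext <;> simp [lieD, smul_sub])

variable {C}

@[simp]
theorem dorfman_apply (ω : Ω) (p q : V × Ω) :
    C.dorfman ω p q =
      (⁅p.1, q.1⁆, C.lieD p.1 q.2 - C.ι q.1 (C.d p.2) - C.ι q.1 (C.ι p.1 ω)) := rfl

theorem dorfman_leibniz {ω : Ω} (hω : C.d ω = 0) (a b c : V × Ω) :
    C.dorfman ω a (C.dorfman ω b c)
      = C.dorfman ω (C.dorfman ω a b) c + C.dorfman ω b (C.dorfman ω a c) := by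
  ext
  · exact leibniz_lie a.1 b.1 c.1
  · simp only [dorfman_apply, lieD, cartan_comm, hω, d_sq, map_add, map_sub, map_zero,
      Prod.snd_add]
    abel

theorem dorfman_add_swap (ω : Ω) (p q : V × Ω) :
    C.dorfman ω p q + C.dorfman ω q p = ((0 : V), C.d (C.courantPairing p q)) := by
  ext
  · simp only [Prod.fst_add, dorfman_apply, ← lie_skew p.1 q.1, neg_add_cancel]
  · simp only [dorfman_apply, lieD, courantPairing, map_add, Prod.snd_add, C.ι_ι_anticomm q.1 p.1]
    abel

theorem dorfman_exact_left (ω φ : Ω) (q : V × Ω) : C.dorfman ω ((0 : V), C.d φ) q = 0 := by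
  ext <;> simp [lieD, d_sq]

theorem courantBracket_eq_dorfman_sub (ω : Ω) (p q : V × Ω) :
    C.courantBracket ω p q
      = C.dorfman ω p q - (2 : ℝ)⁻¹ • ((0 : V), C.d (C.courantPairing p q)) := by
  ext
  · simp [courantBracket]
  · simp only [courantBracket, dorfman_apply, courantPairing, lieD, Prod.snd_sub, Prod.smul_snd,
      map_add, map_sub, smul_add, smul_sub]
    module

end CartanModule

/-- For a closed 3-form `ω`, the Jacobiator of the `ω`-twisted
Courant bracket is exact: the cyclic sum of iterated brackets equals
`(0, ⅙ d(⟨⟦e₁,e₂⟧,e₃⟩ + ⟨⟦e₂,e₃⟧,e₁⟩ + ⟨⟦e₃,e₁⟧,e₂⟩))`; in particular the failure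
of the Jacobi identity is an exact 1-form. -/
theorem courant_jacobiator_exact
    {V : Type*} [LieRing V] [LieAlgebra ℝ V]
    {Ω : Type*} [AddCommGroup Ω] [Module ℝ Ω]
    (C : CartanModule V Ω) (ω : Ω) (hω : C.d ω = 0) (e₁ e₂ e₃ : V × Ω) :
    C.courantBracket ω (C.courantBracket ω e₁ e₂) e₃
      + C.courantBracket ω (C.courantBracket ω e₂ e₃) e₁
      + C.courantBracket ω (C.courantBracket ω e₃ e₁) e₂
      = ((0 : V),
          (6 : ℝ)⁻¹ • C.d
            (C.courantPairing (C.courantBracket ω e₁ e₂) e₃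
              + C.courantPairing (C.courantBracket ω e₂ e₃) e₁
              + C.courantPairing (C.courantBracket ω e₃ e₁) e₂)) := by
  rw [jacobiator_eq_of_leibniz (C.dorfman ω) (LinearMap.inr ℝ V Ω ∘ₗ C.d) C.courantPairing
    (C.courantBracket ω) (CartanModule.courantBracket_eq_dorfman_sub ω)
    (CartanModule.dorfman_leibniz hω) (CartanModule.dorfman_add_swap ω)
    (CartanModule.dorfman_exact_left ω)]
  simp
end
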